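/- arXiv:1609.01197 — 2 statements merged into one kernel-verified Lean document; each statement's English description precedes it below -/
import Mathlib

section
/- (Cyclic sum formula for t-qMZVs, depth 1) For 0 < q < 1, a real parameter t, and an integer k ≥ 2, Σ_{j=0}^{k-2} ζ_q^t(k-j, j+1) = (1 + (k-1)t)·ζ_q(k+1) + t(k-1)(1-q)·Σ_{m≥1} q^{(k-1)m}/[m]^k. -/
open scoped BigOperators

/-- The q-integer [m] = (1-q^m)/(1-q). -/
noncomputable def qint (q : ℝ) (m : ℕ) : ℝ := (1 - q ^ m) / (1 - q)

/-- Depth-one q-zeta value ζ_q(k) = Σ_{m≥1} q^{(k-1)m}/[m]^k. -/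
noncomputable def zetaQ (q : ℝ) (k : ℕ) : ℝ :=
  ∑' m : ℕ, q ^ ((k - 1) * (m + 1)) / (qint q (m + 1)) ^ k

/-- Depth-two qMZV: sum over m₁ > m₂ ≥ 1, parametrized by m₂ = p.2+1, m₁ = p.2+p.1+2. -/
noncomputable def zetaQ2 (q : ℝ) (k₁ k₂ : ℕ) : ℝ :=
  ∑' p : ℕ × ℕ,
    q ^ ((k₁ - 1) * (p.2 + p.1 + 2) + (k₂ - 1) * (p.2 + 1)) /
      ((qint q (p.2 + p.1 + 2)) ^ k₁ * (qint q (p.2 + 1)) ^ k₂)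

/-- Depth-two qMZSV: sum over m₁ ≥ m₂ ≥ 1, parametrized by m₂ = p.2+1, m₁ = p.2+p.1+1. -/
noncomputable def zetaQStar2 (q : ℝ) (k₁ k₂ : ℕ) : ℝ :=
  ∑' p : ℕ × ℕ,
    q ^ ((k₁ - 1) * (p.2 + p.1 + 1) + (k₂ - 1) * (p.2 + 1)) /
      ((qint q (p.2 + p.1 + 1)) ^ k₁ * (qint q (p.2 + 1)) ^ k₂)

/-- Interpolated q-double zeta value. -/
noncomputable def zetaQT (q t : ℝ) (k₁ k₂ : ℕ) : ℝ :=
  zetaQ2 q k₁ k₂ + t * (zetaQ q (k₁ + k₂) + (1 - q) * zetaQ q (k₁ + k₂ - 1))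

/-!
Write `b(m) = q^m/[m]` (`qRatio`), so that the summand of `ζ_q(a+1, c+1)` is
`b(m₁)^a b(m₂)^c / ([m₁][m₂])`. From `[m₁] = [m₂] + q^{m₂}[m₁ - m₂]` one gets
`(b(m₂) - b(m₁)) b(m₁ - m₂) = b(m₁)/[m₂]`, so summing the geometric progression in `j` turns
`Σ_j ζ_q(k-j, j+1)` into `Σ_{m₁>m₂} (b(m₂)^{k-1} - b(m₁)^{k-1}) b(m₁-m₂)/[m₁]`.
For fixed `m₂` the first part telescopes, since `b(n)/[n+m₂] = (b(n) - b(n+m₂))/[m₂]` and `b → 0`,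
to `b(m₂)^{k-1}/[m₂] · Σ_{i ≤ m₂} b(i)`; grouped by `m₁`, the second part is
`b(m₁)^{k-1}/[m₁] · Σ_{i < m₁} b(i)`. The difference is `Σ_m b(m)^k/[m] = ζ_q(k+1)`.
-/

open Finset

lemma HasSum.sum_antidiagonal {α : Type*} [AddCommMonoid α] [TopologicalSpace α] [ContinuousAdd α]
    [RegularSpace α] {f : ℕ × ℕ → α} {a : α} (hf : HasSum f a) :
    HasSum (fun n ↦ ∑ p ∈ antidiagonal n, f p) a := by
  refine (HasAntidiagonal.sigmaAntidiagonalEquivProd.hasSum_iff.mpr hf).sigma fun n ↦ ?_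
  rw [← Finset.sum_finset_coe]
  exact hasSum_fintype _

lemma Summable.hasSum_sub_nat_add {f : ℕ → ℝ} (hf : Summable f) (k : ℕ) :
    HasSum (fun n ↦ f n - f (n + k)) (∑ i ∈ range k, f i) := by
  simpa using hf.hasSum.sub ((hasSum_nat_add_iff' k).mpr hf.hasSum)

lemma Summable.of_finsetSum_of_nonneg {ι κ : Type*} {T : ι → κ → ℝ} {s : Finset ι}
    (h : Summable fun p ↦ ∑ j ∈ s, T j p) (h0 : ∀ j p, 0 ≤ T j p) {j : ι} (hj : j ∈ s) :
    Summable (T j) :=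
  h.of_nonneg_of_le (h0 j) fun p ↦ Finset.single_le_sum (fun i _ ↦ h0 i p) hj

lemma qint_add (q : ℝ) (a b : ℕ) : qint q (a + b) = qint q a + q ^ a * qint q b := by
  rcases eq_or_ne q 1 with rfl | hq
  · simp [qint]
  · have : 1 - q ≠ 0 := sub_ne_zero.mpr hq.symm
    simp only [qint, pow_add]
    field_simp
    ring

section qint

variable {q : ℝ}

lemma qint_nonneg (hq0 : 0 ≤ q) (hq1 : q < 1) (m : ℕ) : 0 ≤ qint q m :=
  div_nonneg (sub_nonneg.mpr (pow_le_one₀ hq0 hq1.le)) (sub_pos.mpr hq1).le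

lemma one_le_qint (hq0 : 0 ≤ q) (hq1 : q < 1) {m : ℕ} (hm : m ≠ 0) : 1 ≤ qint q m := by
  rw [qint, one_le_div (sub_pos.mpr hq1)]
  linarith [pow_le_of_le_one hq0 hq1.le hm]

lemma qint_ne_zero (hq0 : 0 ≤ q) (hq1 : q < 1) {m : ℕ} (hm : m ≠ 0) : qint q m ≠ 0 :=
  (zero_lt_one.trans_le (one_le_qint hq0 hq1 hm)).ne'

end qint

noncomputable def qRatio (q : ℝ) (m : ℕ) : ℝ := q ^ m / qint q m

section qRatio

variable {q : ℝ}

lemma qRatio_sub_qRatio_add {n m : ℕ} (hn : qint q n ≠ 0) (hnm : qint q (n + m) ≠ 0) :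
    qRatio q n - qRatio q (n + m) = q ^ n * qint q m / (qint q n * qint q (n + m)) := by
  rw [qRatio, qRatio, div_sub_div _ _ hn hnm]
  congr 1
  rw [add_comm n m, qint_add q m n, pow_add]
  ring

lemma qRatio_sub_mul_qRatio {n m : ℕ} (hn : qint q n ≠ 0) (hm : qint q m ≠ 0)
    (hnm : qint q (n + m) ≠ 0) :
    (qRatio q m - qRatio q (n + m)) * qRatio q n = qRatio q (n + m) / qint q m := by
  rw [add_comm n m] at hnm ⊢
  rw [qRatio_sub_qRatio_add hm hnm, qRatio, qRatio, pow_add]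
  field_simp

lemma sum_qRatio_pow_mul_qRatio_pow {n m : ℕ} (hn : qint q n ≠ 0) (hm : qint q m ≠ 0)
    (hnm : qint q (n + m) ≠ 0) (K : ℕ) :
    ∑ j ∈ range (K + 1), qRatio q (n + m) ^ (K - j + 1) * qRatio q m ^ j /
        (qint q (n + m) * qint q m) =
      (qRatio q m ^ (K + 1) - qRatio q (n + m) ^ (K + 1)) * qRatio q n / qint q (n + m) := by
  have hgeom := geom_sum₂_mul (qRatio q m) (qRatio q (n + m)) (K + 1)
  rw [Nat.add_sub_cancel] at hgeom
  rw [← hgeom, mul_assoc, qRatio_sub_mul_qRatio hn hm hnm, Finset.sum_mul, Finset.sum_div]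
  refine Finset.sum_congr rfl fun j _ ↦ ?_
  rw [pow_succ]
  field_simp

lemma qRatio_nonneg (hq0 : 0 ≤ q) (hq1 : q < 1) (m : ℕ) : 0 ≤ qRatio q m :=
  div_nonneg (pow_nonneg hq0 m) (qint_nonneg hq0 hq1 m)

lemma qRatio_le_pow (hq0 : 0 ≤ q) (hq1 : q < 1) (m : ℕ) : qRatio q m ≤ q ^ m := by
  rcases eq_or_ne m 0 with rfl | hm
  · simp [qRatio, qint]
  · exact div_le_self (pow_nonneg hq0 m) (one_le_qint hq0 hq1 hm)

lemma qRatio_pow_succ_le_pow (hq0 : 0 ≤ q) (hq1 : q < 1) (K m : ℕ) :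
    qRatio q m ^ (K + 1) ≤ q ^ m := by
  have hle_one := (qRatio_le_pow hq0 hq1 m).trans (pow_le_one₀ hq0 hq1.le)
  exact (pow_le_of_le_one (qRatio_nonneg hq0 hq1 m) hle_one K.succ_ne_zero).trans
    (qRatio_le_pow hq0 hq1 m)

lemma summable_qRatio (hq0 : 0 ≤ q) (hq1 : q < 1) : Summable (qRatio q) :=
  (summable_geometric_of_lt_one hq0 hq1).of_nonneg_of_le (qRatio_nonneg hq0 hq1)
    (qRatio_le_pow hq0 hq1)

/-! In the double sums below `p : ℕ × ℕ` stands for the indices `m₂ = p.2 + 1` and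
`m₁ = (p.1 + 1) + m₂`, as in `zetaQ2`, and a weight `φ` sits on `m₂` or on `m₁`. -/

lemma summable_mul_qRatio_div_qint (hq0 : 0 ≤ q) (hq1 : q < 1) {φ : ℕ × ℕ → ℝ}
    (hφ0 : ∀ p, 0 ≤ φ p) (hφ : ∀ p, φ p ≤ q ^ (p.2 + 1)) :
    Summable fun p : ℕ × ℕ ↦ φ p * qRatio q (p.1 + 1) / qint q (p.1 + 1 + (p.2 + 1)) := by
  have hgeom := summable_geometric_of_lt_one hq0 hq1
  have hprod : Summable fun p : ℕ × ℕ ↦ q ^ (p.2 + 1) * q ^ (p.1 + 1) := by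
    simpa only [pow_succ, mul_mul_mul_comm, mul_comm] using
      (hgeom.mul_of_nonneg hgeom (pow_nonneg hq0) (pow_nonneg hq0)).mul_left (q * q)
  refine hprod.of_nonneg_of_le (fun p ↦ ?_) fun p ↦ ?_
  · exact div_nonneg (mul_nonneg (hφ0 p) (qRatio_nonneg hq0 hq1 _)) (qint_nonneg hq0 hq1 _)
  · calc φ p * qRatio q (p.1 + 1) / qint q (p.1 + 1 + (p.2 + 1))
        ≤ φ p * qRatio q (p.1 + 1) :=
          div_le_self (mul_nonneg (hφ0 p) (qRatio_nonneg hq0 hq1 _))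
            (one_le_qint hq0 hq1 (by omega))
      _ ≤ q ^ (p.2 + 1) * q ^ (p.1 + 1) :=
          mul_le_mul (hφ p) (qRatio_le_pow hq0 hq1 _) (qRatio_nonneg hq0 hq1 _) (pow_nonneg hq0 _)

lemma hasSum_weight_lower (hq0 : 0 ≤ q) (hq1 : q < 1) {φ : ℕ → ℝ} {a : ℝ}
    (h : HasSum (fun p : ℕ × ℕ ↦
      φ (p.2 + 1) * qRatio q (p.1 + 1) / qint q (p.1 + 1 + (p.2 + 1))) a) :
    HasSum (fun m ↦ φ (m + 1) / qint q (m + 1) * ∑ i ∈ range (m + 1), qRatio q (i + 1)) a := by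
  refine ((Equiv.prodComm ℕ ℕ).hasSum_iff.mpr h).prod_fiberwise fun m ↦ ?_
  have hb := ((summable_nat_add_iff 1).mpr (summable_qRatio hq0 hq1)).hasSum_sub_nat_add (m + 1)
  refine (hb.mul_left (φ (m + 1) / qint q (m + 1))).congr_fun fun n ↦ ?_
  simp only [Function.comp_apply, Equiv.prodComm_apply, Prod.swap_prod_mk]
  rw [show n + (m + 1) + 1 = n + 1 + (m + 1) by ring,
    qRatio_sub_qRatio_add (qint_ne_zero hq0 hq1 n.succ_ne_zero)
      (qint_ne_zero hq0 hq1 (by omega)), qRatio]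
  field_simp [qint_ne_zero hq0 hq1 m.succ_ne_zero]

lemma hasSum_weight_upper {φ : ℕ → ℝ} {c : ℝ}
    (h : HasSum (fun p : ℕ × ℕ ↦
      φ (p.1 + 1 + (p.2 + 1)) * qRatio q (p.1 + 1) / qint q (p.1 + 1 + (p.2 + 1))) c) :
    HasSum (fun s ↦ φ (s + 2) / qint q (s + 2) * ∑ i ∈ range (s + 1), qRatio q (i + 1)) c := by
  convert h.sum_antidiagonal using 2 with s
  rw [Finset.mul_sum, Finset.Nat.sum_antidiagonal_eq_sum_range_succ_mk]
  refine Finset.sum_congr rfl fun i hi ↦ ?_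
  rw [show i + 1 + (s - i + 1) = s + 2 by grind]
  ring

lemma hasSum_weight_lower_sub_upper (hq0 : 0 ≤ q) (hq1 : q < 1) {φ : ℕ → ℝ} {a c : ℝ}
    (hlower : HasSum (fun p : ℕ × ℕ ↦
      φ (p.2 + 1) * qRatio q (p.1 + 1) / qint q (p.1 + 1 + (p.2 + 1))) a)
    (hupper : HasSum (fun p : ℕ × ℕ ↦
      φ (p.1 + 1 + (p.2 + 1)) * qRatio q (p.1 + 1) / qint q (p.1 + 1 + (p.2 + 1))) c) :
    HasSum (fun m ↦ φ (m + 1) * qRatio q (m + 1) / qint q (m + 1)) (a - c) := by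
  have hupper' : HasSum (fun m ↦
      φ (m + 1) / qint q (m + 1) * ∑ i ∈ range m, qRatio q (i + 1)) c :=
    (hasSum_nat_add_iff' 1).mp (by simpa using hasSum_weight_upper hupper)
  refine ((hasSum_weight_lower hq0 hq1 hlower).sub hupper').congr_fun fun m ↦ ?_
  rw [Finset.sum_range_succ]
  ring

end qRatio

lemma zetaQ_succ (q : ℝ) (K : ℕ) :
    zetaQ q (K + 1) = ∑' m : ℕ, qRatio q (m + 1) ^ K / qint q (m + 1) := by
  refine tsum_congr fun m ↦ ?_
  rw [Nat.add_sub_cancel, qRatio, pow_mul, div_pow, pow_succ]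
  ring

lemma zetaQ2_succ_succ (q : ℝ) (a b : ℕ) :
    zetaQ2 q (a + 1) (b + 1) = ∑' p : ℕ × ℕ,
      qRatio q (p.1 + 1 + (p.2 + 1)) ^ a * qRatio q (p.2 + 1) ^ b /
        (qint q (p.1 + 1 + (p.2 + 1)) * qint q (p.2 + 1)) := by
  refine tsum_congr fun p ↦ ?_
  rw [show p.2 + p.1 + 2 = p.1 + 1 + (p.2 + 1) by ring, Nat.add_sub_cancel, Nat.add_sub_cancel,
    qRatio, qRatio, pow_add, pow_mul, pow_mul, div_pow, div_pow, pow_succ, pow_succ]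
  ring

theorem sum_zetaQ2_eq_zetaQ {q : ℝ} (hq0 : 0 ≤ q) (hq1 : q < 1) {k : ℕ} (hk : 2 ≤ k) :
    ∑ j ∈ range (k - 1), zetaQ2 q (k - j) (j + 1) = zetaQ q (k + 1) := by
  obtain ⟨K, rfl⟩ : ∃ K, k = K + 2 := ⟨k - 2, by omega⟩
  have hint {m : ℕ} (hm : m ≠ 0) := qint_ne_zero hq0 hq1 hm
  set T : ℕ → ℕ × ℕ → ℝ := fun j p ↦ qRatio q (p.1 + 1 + (p.2 + 1)) ^ (K - j + 1) *
    qRatio q (p.2 + 1) ^ j / (qint q (p.1 + 1 + (p.2 + 1)) * qint q (p.2 + 1))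
  set X : ℕ × ℕ → ℝ := fun p ↦
    qRatio q (p.2 + 1) ^ (K + 1) * qRatio q (p.1 + 1) / qint q (p.1 + 1 + (p.2 + 1))
  set Y : ℕ × ℕ → ℝ := fun p ↦ qRatio q (p.1 + 1 + (p.2 + 1)) ^ (K + 1) * qRatio q (p.1 + 1) /
    qint q (p.1 + 1 + (p.2 + 1))
  have hTXY (p : ℕ × ℕ) : ∑ j ∈ range (K + 1), T j p = X p - Y p := by
    simpa only [sub_mul, sub_div] using sum_qRatio_pow_mul_qRatio_pow (hint p.1.succ_ne_zero)
      (hint p.2.succ_ne_zero) (hint (by omega)) K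
  have hX : Summable X := summable_mul_qRatio_div_qint hq0 hq1
    (fun _ ↦ pow_nonneg (qRatio_nonneg hq0 hq1 _) _) fun _ ↦ qRatio_pow_succ_le_pow hq0 hq1 _ _
  have hY : Summable Y := summable_mul_qRatio_div_qint hq0 hq1
    (fun _ ↦ pow_nonneg (qRatio_nonneg hq0 hq1 _) _) fun p ↦
      (qRatio_pow_succ_le_pow hq0 hq1 _ _).trans (pow_le_pow_of_le_one hq0 hq1.le (by omega))
  have hT0 (j : ℕ) (p : ℕ × ℕ) : 0 ≤ T j p :=
    div_nonneg (mul_nonneg (pow_nonneg (qRatio_nonneg hq0 hq1 _) _)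
      (pow_nonneg (qRatio_nonneg hq0 hq1 _) _))
      (mul_nonneg (qint_nonneg hq0 hq1 _) (qint_nonneg hq0 hq1 _))
  have hT (j : ℕ) (hj : j ∈ range (K + 1)) : Summable (T j) :=
    Summable.of_finsetSum_of_nonneg (by simpa only [hTXY] using hX.sub hY) hT0 hj
  calc ∑ j ∈ range (K + 2 - 1), zetaQ2 q (K + 2 - j) (j + 1)
      = ∑ j ∈ range (K + 1), ∑' p, T j p := by
        refine Finset.sum_congr rfl fun j hj ↦ ?_
        rw [show K + 2 - j = K - j + 1 + 1 by grind, zetaQ2_succ_succ]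
    _ = ∑' p, (X p - Y p) := by
        rw [← Summable.tsum_finsetSum hT]
        exact tsum_congr hTXY
    _ = zetaQ q (K + 2 + 1) := by
        rw [hX.tsum_sub hY, zetaQ_succ, ← (hasSum_weight_lower_sub_upper
          (φ := fun i ↦ qRatio q i ^ (K + 1)) hq0 hq1 hX.hasSum hY.hasSum).tsum_eq]
        exact tsum_congr fun m ↦ by ring

theorem stmt_8 (q t : ℝ) (hq0 : 0 < q) (hq1 : q < 1) (k : ℕ) (hk : 2 ≤ k) :
    ∑ j ∈ Finset.range (k - 1), zetaQT q t (k - j) (j + 1) =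
      (1 + ((k : ℝ) - 1) * t) * zetaQ q (k + 1) +
        t * ((k : ℝ) - 1) * (1 - q) * zetaQ q k := by
  have hzetaQT (j : ℕ) (hj : j ∈ range (k - 1)) : zetaQT q t (k - j) (j + 1) =
      zetaQ2 q (k - j) (j + 1) + t * (zetaQ q (k + 1) + (1 - q) * zetaQ q k) := by
    rw [zetaQT, show k - j + (j + 1) = k + 1 by grind, Nat.add_sub_cancel]
  rw [Finset.sum_congr rfl hzetaQT, Finset.sum_add_distrib, sum_zetaQ2_eq_zetaQ hq0.le hq1 hk,
    Finset.sum_const, Finset.card_range, nsmul_eq_mul, Nat.cast_sub (by omega : 1 ≤ k)]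
  push_cast
  ring
end

section
/- (q-stuffle star version, depth one) For 0 < q < 1 and integers i, j ≥ 2, ζ_q^⋆(i) ζ_q^⋆(j) = ζ_q^⋆(i,j) + ζ_q^⋆(j,i) - ζ_q(i+j) - (1-q)·Σ_{m≥1} q^{(i+j-2)m}/[m]^{i+j-1}. -/
open scoped BigOperators

/-!
Expanding `ζ_q(i) ζ_q(j)` as a double series over pairs `(m, n)`, the pairs with `m ≥ n` give
`ζ_q^⋆(i, j)` and those with `n ≥ m` give `ζ_q^⋆(j, i)`, so the diagonal is counted twice.
Since `(1 - q) [m] = 1 - q ^ m`, a diagonal term splits as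
`q^{(i+j-2)m}/[m]^{i+j} = q^{(i+j-1)m}/[m]^{i+j} + (1 - q) q^{(i+j-2)m}/[m]^{i+j-1}`,
so the diagonal sums to `ζ_q(i + j) + (1 - q) Σ_m q^{(i+j-2)m}/[m]^{i+j-1}`.
-/

section ShiftedSums

variable {ι α : Type*} [AddCommMonoid α] [TopologicalSpace α]

theorem tsum_indicator_eq_eq_tsum_diag (h : ι × ι → α) :
    ∑' p, {p : ι × ι | p.1 = p.2}.indicator h p = ∑' n, h (n, n) := by
  have hinj : Function.Injective fun n : ι => (n, n) := fun _ _ hab => congrArg Prod.fst hab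
  rw [← hinj.tsum_eq (f := {p : ι × ι | p.1 = p.2}.indicator h)]
  · exact tsum_congr fun n => Set.indicator_of_mem (s := {p : ι × ι | p.1 = p.2}) rfl h
  · rintro ⟨m, n⟩ hp
    obtain rfl : m = n := (Set.support_indicator_subset hp : (m, n) ∈ {p : ι × ι | p.1 = p.2})
    exact ⟨m, rfl⟩

theorem tsum_shift_fst_eq_tsum_indicator_le (F : ℕ × ℕ → α) :
    ∑' p : ℕ × ℕ, F (p.2 + p.1, p.2) = ∑' p, {p : ℕ × ℕ | p.2 ≤ p.1}.indicator F p := by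
  have hinj : Function.Injective fun p : ℕ × ℕ => (p.2 + p.1, p.2) := by
    rintro ⟨a, b⟩ ⟨c, d⟩ h
    simp only [Prod.mk.injEq] at h
    ext <;> omega
  rw [← hinj.tsum_eq (f := {p : ℕ × ℕ | p.2 ≤ p.1}.indicator F)]
  · exact tsum_congr fun p =>
      (Set.indicator_of_mem (s := {p : ℕ × ℕ | p.2 ≤ p.1}) (Nat.le_add_right _ _) F).symm
  · rintro ⟨m, n⟩ hp
    have hnm : n ≤ m := (Set.support_indicator_subset hp : (m, n) ∈ {p : ℕ × ℕ | p.2 ≤ p.1})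
    exact ⟨(m - n, n), Prod.ext (Nat.add_sub_cancel' hnm) rfl⟩

theorem tsum_shift_snd_eq_tsum_indicator_ge (F : ℕ × ℕ → α) :
    ∑' p : ℕ × ℕ, F (p.2, p.2 + p.1) = ∑' p, {p : ℕ × ℕ | p.1 ≤ p.2}.indicator F p :=
  (tsum_shift_fst_eq_tsum_indicator_le (F ∘ Prod.swap)).trans
    ((Equiv.prodComm ℕ ℕ).tsum_eq ({p : ℕ × ℕ | p.1 ≤ p.2}.indicator F))

end ShiftedSums

theorem tsum_eq_tsum_indicator_le_add_tsum_indicator_ge_sub_tsum_diag {ι α : Type*}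
    [LinearOrder ι] [AddCommGroup α] [UniformSpace α] [IsUniformAddGroup α] [CompleteSpace α]
    [T2Space α] {h : ι × ι → α} (hh : Summable h) :
    ∑' p, h p = ∑' p, {p : ι × ι | p.2 ≤ p.1}.indicator h p
      + ∑' p, {p : ι × ι | p.1 ≤ p.2}.indicator h p - ∑' n, h (n, n) := by
  have hpt : ∀ p, h p + {p : ι × ι | p.1 = p.2}.indicator h p
      = {p : ι × ι | p.2 ≤ p.1}.indicator h p + {p : ι × ι | p.1 ≤ p.2}.indicator h p := by
    intro p
    simp only [Set.indicator_apply, Set.mem_ofPred_eq]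
    rcases lt_trichotomy p.1 p.2 with hlt | heq | hgt
    · simp [hlt.ne, hlt.le, not_le.2 hlt]
    · simp [heq]
    · simp [hgt.ne', hgt.le, not_le.2 hgt]
  rw [← tsum_indicator_eq_eq_tsum_diag, eq_sub_iff_add_eq, ← hh.tsum_add (hh.indicator _),
    ← (hh.indicator _).tsum_add (hh.indicator _), tsum_congr hpt]

/-- The summand of `zetaQ q k` at `m`, i.e. the term of ζ_q(k) with index `m + 1`. -/
noncomputable def zetaQTerm (q : ℝ) (k m : ℕ) : ℝ := q ^ ((k - 1) * (m + 1)) / qint q (m + 1) ^ k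

theorem one_sub_mul_qint (q : ℝ) (m : ℕ) : (1 - q) * qint q m = 1 - q ^ m := by
  rcases eq_or_ne q 1 with rfl | hq1
  · simp [qint]
  · exact mul_div_cancel₀ _ (sub_ne_zero.2 hq1.symm)

theorem one_le_qint_succ {q : ℝ} (hq0 : 0 ≤ q) (hq1 : q < 1) (m : ℕ) : 1 ≤ qint q (m + 1) := by
  rw [qint, le_div_iff₀ (sub_pos.2 hq1), one_mul]
  linarith [pow_le_of_le_one hq0 hq1.le (by omega : m + 1 ≠ 0)]

theorem zetaQTerm_nonneg {q : ℝ} (hq0 : 0 ≤ q) (hq1 : q < 1) (k m : ℕ) : 0 ≤ zetaQTerm q k m :=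
  div_nonneg (pow_nonneg hq0 _) (pow_nonneg (zero_le_one.trans (one_le_qint_succ hq0 hq1 m)) _)

theorem summable_zetaQTerm {q : ℝ} (hq0 : 0 ≤ q) (hq1 : q < 1) {k : ℕ} (hk : 2 ≤ k) :
    Summable (zetaQTerm q k) := by
  refine (summable_geometric_of_lt_one hq0 hq1).of_nonneg_of_le (zetaQTerm_nonneg hq0 hq1 k)
    fun m => ?_
  calc zetaQTerm q k m ≤ q ^ ((k - 1) * (m + 1)) :=
        div_le_self (pow_nonneg hq0 _) (one_le_pow₀ (one_le_qint_succ hq0 hq1 m))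
    _ ≤ q ^ m := pow_le_pow_of_le_one hq0 hq1.le
        ((Nat.le_succ m).trans (Nat.le_mul_of_pos_left _ (by omega)))

theorem zetaQTerm_mul_zetaQTerm (q : ℝ) {i j : ℕ} (hi : 1 ≤ i) (hj : 1 ≤ j) (m : ℕ) :
    zetaQTerm q i m * zetaQTerm q j m
      = zetaQTerm q (i + j) m + (1 - q) * zetaQTerm q (i + j - 1) m := by
  obtain ⟨a, rfl⟩ := Nat.exists_eq_add_of_le' hi
  obtain ⟨b, rfl⟩ := Nat.exists_eq_add_of_le' hj
  have key := one_sub_mul_qint q (m + 1)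
  simp only [zetaQTerm, show a + 1 + (b + 1) - 1 = a + b + 1 by omega, Nat.add_sub_cancel,
    pow_mul']
  generalize q ^ (m + 1) = x, qint q (m + 1) = X at key ⊢
  rcases eq_or_ne X 0 with rfl | hX
  · simp
  · field_simp
    linear_combination (-(x ^ (a + b) * X ^ (a + b + 2) * X ^ (a + b + 1))) * key

theorem tsum_zetaQTerm_mul_zetaQTerm {q : ℝ} (hq0 : 0 ≤ q) (hq1 : q < 1) {i j : ℕ} (hi : 2 ≤ i)
    (hj : 2 ≤ j) :
    ∑' m, zetaQTerm q i m * zetaQTerm q j m = zetaQ q (i + j) + (1 - q) * zetaQ q (i + j - 1) := by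
  simp_rw [zetaQTerm_mul_zetaQTerm q (by omega : 1 ≤ i) (by omega : 1 ≤ j)]
  rw [(summable_zetaQTerm hq0 hq1 (by omega)).tsum_add
    ((summable_zetaQTerm hq0 hq1 (by omega)).mul_left _), tsum_mul_left]
  rfl

theorem zetaQStar2_eq_tsum_indicator_le (q : ℝ) (k₁ k₂ : ℕ) :
    zetaQStar2 q k₁ k₂ = ∑' p, {p : ℕ × ℕ | p.2 ≤ p.1}.indicator
      (fun p => zetaQTerm q k₁ p.1 * zetaQTerm q k₂ p.2) p := by
  rw [zetaQStar2, ← tsum_shift_fst_eq_tsum_indicator_le]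
  exact tsum_congr fun p => by rw [zetaQTerm, zetaQTerm, div_mul_div_comm, ← pow_add]

theorem zetaQStar2_eq_tsum_indicator_ge (q : ℝ) (k₁ k₂ : ℕ) :
    zetaQStar2 q k₂ k₁ = ∑' p, {p : ℕ × ℕ | p.1 ≤ p.2}.indicator
      (fun p => zetaQTerm q k₁ p.1 * zetaQTerm q k₂ p.2) p := by
  rw [zetaQStar2, ← tsum_shift_snd_eq_tsum_indicator_ge]
  exact tsum_congr fun p => by
    dsimp only
    rw [mul_comm (zetaQTerm q k₁ _), zetaQTerm, zetaQTerm, div_mul_div_comm, ← pow_add]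

theorem stmt_18 (q : ℝ) (hq0 : 0 < q) (hq1 : q < 1) (i j : ℕ) (hi : 2 ≤ i) (hj : 2 ≤ j) :
    zetaQ q i * zetaQ q j =
      zetaQStar2 q i j + zetaQStar2 q j i - zetaQ q (i + j) -
        (1 - q) * zetaQ q (i + j - 1) := by
  have hsi : Summable fun m => ‖zetaQTerm q i m‖ := (summable_zetaQTerm hq0.le hq1 hi).norm
  have hsj : Summable fun m => ‖zetaQTerm q j m‖ := (summable_zetaQTerm hq0.le hq1 hj).norm
  rw [zetaQStar2_eq_tsum_indicator_le, zetaQStar2_eq_tsum_indicator_ge, sub_sub,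
    ← tsum_zetaQTerm_mul_zetaQTerm hq0.le hq1 hi hj]
  exact (tsum_mul_tsum_of_summable_norm hsi hsj).trans
    (tsum_eq_tsum_indicator_le_add_tsum_indicator_ge_sub_tsum_diag
      (summable_mul_of_summable_norm hsi hsj))
end
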